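/- arXiv:1603.00711 — 5 statements merged into one kernel-verified Lean document; each statement's English description precedes it below -/
import Mathlib

section
/- Let ℓ be a prime and let Π be a 2×2 matrix over the ring ℤ_ℓ of ℓ-adic integers whose characteristic polynomial has two distinct roots λ, μ ∈ ℤ_ℓ. Set h = v_ℓ(λ − μ). Then there exists a unique natural number e with 0 ≤ e ≤ h such that Π is conjugate, by an element of GL₂(ℤ_ℓ), to the upper-triangular matrix with first row (λ, ℓ^e) and second row (0, μ). -/
/-!
Since `λ` is a root of the characteristic polynomial, `Π - λ` has a nonzero kernel vector;
dividing it by the gcd of its coordinates gives a primitive eigenvector, which extends to a basis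
of `ℤ_ℓ²`, so `Π` is conjugate to `!![λ, c; 0, μ]`. Conjugating by `!![w, t; 0, 1]` replaces `c`
by `w⁻¹ (c + t (λ - μ))`, which can be made `ℓ ^ e` with `e = min (v_ℓ c) h`. Conversely, for
`e ≤ h` the power `ℓ ^ e` is the gcd of the entries of `Π - λ`, a conjugation invariant.
-/

open Polynomial

theorem Units.exists_inv_mul_mul_eq_iff_isConj {M : Type*} [Monoid M] {a b : M} :
    (∃ u : Mˣ, ↑u⁻¹ * a * ↑u = b) ↔ IsConj a b := by
  refine ⟨fun ⟨u, hu⟩ => ⟨u⁻¹, ?_⟩, fun ⟨c, hc⟩ => ⟨c⁻¹, ?_⟩⟩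
  · rw [SemiconjBy, ← hu, mul_assoc, mul_assoc, Units.mul_inv, mul_one]
  · rw [inv_inv, hc.eq, mul_assoc, Units.mul_inv, mul_one]

theorem exists_eq_smul_isCoprime {R : Type*} [CommRing R] [IsDomain R] [IsBezout R]
    {v : Fin 2 → R} (hv : v ≠ 0) :
    ∃ g ≠ (0 : R), ∃ w : Fin 2 → R, v = g • w ∧ IsCoprime (w 0) (w 1) := by
  obtain ⟨a, b, hab⟩ := IsBezout.gcd_eq_sum (v 0) (v 1)
  obtain ⟨x, hx⟩ := IsBezout.gcd_dvd_left (v 0) (v 1)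
  obtain ⟨y, hy⟩ := IsBezout.gcd_dvd_right (v 0) (v 1)
  generalize IsBezout.gcd (v 0) (v 1) = g at hab hx hy
  have hv_eq : v = g • ![x, y] := funext fun i => by fin_cases i <;> simp [hx, hy]
  have hg : g ≠ 0 := by
    rintro rfl
    exact hv (by simp [hv_eq])
  refine ⟨g, hg, ![x, y], hv_eq, a, b, mul_left_cancel₀ hg ?_⟩
  simp only [Matrix.cons_val_zero, Matrix.cons_val_one]
  linear_combination hab - a * hx - b * hy

namespace Matrix

variable {R : Type*}

theorem trace_eq_of_isConj {n : Type*} [Fintype n] [DecidableEq n] [CommSemiring R]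
    {A B : Matrix n n R} (h : IsConj A B) : A.trace = B.trace := by
  obtain ⟨c, hc⟩ := h
  rw [← trace_units_conj c A, hc.eq, mul_assoc, c.mul_inv, mul_one]

variable [CommRing R]

theorem trace_eq_add_of_charpoly_eq {A : Matrix (Fin 2) (Fin 2) R} {a b : R}
    (h : A.charpoly = (X - C a) * (X - C b)) : A.trace = a + b := by
  rw [trace_eq_neg_charpoly_coeff, h, Fintype.card_fin, ← zero_add (2 - 1), coeff_mul_X_sub_C]
  simp [add_comm]

theorem isConj_of_mulVec_eq_smul {A : Matrix (Fin 2) (Fin 2) R} {a : R} {v : Fin 2 → R}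
    (hv : A *ᵥ v = a • v) (hcop : IsCoprime (v 0) (v 1)) :
    ∃ c d, IsConj A !![a, c; 0, d] := by
  obtain ⟨x, y, hxy⟩ := hcop
  have hv₀ : A 0 0 * v 0 + A 0 1 * v 1 = a * v 0 := by
    simpa [mulVec, dotProduct, Fin.sum_univ_two] using congrFun hv 0
  have hv₁ : A 1 0 * v 0 + A 1 1 * v 1 = a * v 1 := by
    simpa [mulVec, dotProduct, Fin.sum_univ_two] using congrFun hv 1
  have hU : IsUnit !![v 0, -y; v 1, x] := by
    rw [isUnit_iff_isUnit_det, det_fin_two_of,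
      show v 0 * x - -y * v 1 = 1 by linear_combination hxy]
    exact isUnit_one
  -- `(c, d)` is `![w₀, w₁] = A *ᵥ ![-y, x]` multiplied by the inverse `!![x, y; -v 1, v 0]`.
  set w₀ := -A 0 0 * y + A 0 1 * x
  set w₁ := -A 1 0 * y + A 1 1 * x
  refine ⟨x * w₀ + y * w₁, -v 1 * w₀ + v 0 * w₁, IsConj.symm ⟨hU.unit, ?_⟩⟩
  rw [SemiconjBy, IsUnit.unit_spec, eta_fin_two A, mul_fin_two, mul_fin_two]
  refine congrArg of (vec2_eq (vec2_eq ?_ ?_) (vec2_eq ?_ ?_))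
  · linear_combination -hv₀
  · linear_combination w₀ * hxy
  · linear_combination -hv₁
  · linear_combination w₁ * hxy

theorem exists_isConj_upperTriangular [IsDomain R] [IsBezout R] (A : Matrix (Fin 2) (Fin 2) R)
    {a : R} (ha : A.charpoly.IsRoot a) : ∃ c, IsConj A !![a, c; 0, A.trace - a] := by
  obtain ⟨v, hv0, hv⟩ := exists_mulVec_eq_zero_iff.mpr ((eval_charpoly A a).symm.trans ha)
  obtain ⟨g, hg, w, rfl, hw⟩ := exists_eq_smul_isCoprime hv0
  have hAw : A *ᵥ w = a • w := by
    refine smul_right_injective _ hg ?_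
    rw [sub_mulVec, sub_eq_zero] at hv
    simp only [scalar_apply, diagonal_const_mulVec, mulVec_smul] at hv
    exact hv.symm
  obtain ⟨c, d, hA⟩ := isConj_of_mulVec_eq_smul hAw hw
  have hd : d = A.trace - a := by
    rw [trace_eq_of_isConj hA, trace_fin_two_of]; ring
  exact ⟨c, hd ▸ hA⟩

theorem isConj_upperTriangular_of_mul_eq {a c c' d : R} (w : Rˣ) (t : R)
    (h : w * c' = c + t * (a - d)) : IsConj !![a, c; 0, d] !![a, c'; 0, d] := by
  have hU : IsUnit !![(w : R), t; 0, 1] := by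
    rw [isUnit_iff_isUnit_det, det_fin_two_of, mul_one, mul_zero, sub_zero]
    exact w.isUnit
  refine IsConj.symm ⟨hU.unit, ?_⟩
  rw [SemiconjBy, IsUnit.unit_spec, mul_fin_two, mul_fin_two]
  refine congrArg of (vec2_eq (vec2_eq ?_ ?_) (vec2_eq ?_ ?_))
  · ring
  · linear_combination h
  · ring
  · ring

theorem dvd_of_isConj_upperTriangular {a d x x' y : R}
    (h : IsConj !![a, x; 0, d] !![a, x'; 0, d]) (hx : y ∣ x) (hd : y ∣ d - a) : y ∣ x' := by
  -- `y` divides every entry of `!![a, x; 0, d] - a • 1`, a property preserved by conjugation.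
  obtain ⟨u, hu⟩ := h
  obtain ⟨x₁, rfl⟩ := hx
  obtain ⟨d₁, hd₁⟩ := hd
  obtain rfl := eq_add_of_sub_eq' hd₁
  set N : Matrix (Fin 2) (Fin 2) R := !![0, x₁; 0, d₁]
  have hsplit : !![a, y * x₁; 0, a + y * d₁] = a • 1 + y • N := by
    ext i j
    fin_cases i <;> fin_cases j <;> simp [N]
  have hconj :
      !![a, x'; 0, a + y * d₁] = a • 1 + y • (u * N * u⁻¹ : Matrix (Fin 2) (Fin 2) R) := by
    rw [← mul_one !![a, x'; 0, a + y * d₁], ← u.mul_inv, ← mul_assoc, ← hu.eq, hsplit]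
    simp only [mul_add, add_mul, Matrix.mul_smul, Matrix.smul_mul, mul_one, u.mul_inv]
  have hx' : x' = y * (u * N * u⁻¹ : Matrix (Fin 2) (Fin 2) R) 0 1 := by
    simpa using congrFun₂ hconj 0 1
  exact Dvd.intro _ hx'.symm

end Matrix

theorem PadicInt.pow_valuation_dvd {p : ℕ} [Fact p.Prime] (x : ℤ_[p]) :
    (p : ℤ_[p]) ^ x.valuation ∣ x := by
  rcases eq_or_ne x 0 with rfl | hx
  · exact dvd_zero _
  · exact Dvd.intro_left _ (unitCoeff_spec hx).symm

theorem PadicInt.exists_add_mul_eq_unit_mul_pow {p : ℕ} [Fact p.Prime] (c : ℤ_[p]) {δ : ℤ_[p]}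
    (hδ : δ ≠ 0) :
    ∃ e ≤ δ.valuation, ∃ t : ℤ_[p], ∃ w : ℤ_[p]ˣ, c + t * δ = w * (p : ℤ_[p]) ^ e := by
  by_cases hc : (p : ℤ_[p]) ^ δ.valuation ∣ c
  · obtain ⟨c₁, hc₁⟩ := hc
    set u := unitCoeff hδ
    -- With `δ = u * p ^ δ.valuation`, this `t` makes `c + t * δ = p ^ δ.valuation`.
    refine ⟨δ.valuation, le_rfl, (1 - c₁) * ↑u⁻¹, 1, ?_⟩
    rw [Units.val_one]
    linear_combination hc₁ + (1 - c₁) * ↑u⁻¹ * unitCoeff_spec hδ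
      + (1 - c₁) * (p : ℤ_[p]) ^ δ.valuation * u.inv_mul
  · have hc0 : c ≠ 0 := by rintro rfl; exact hc (dvd_zero _)
    refine ⟨c.valuation, ?_, 0, unitCoeff hc0, by rw [zero_mul, add_zero, ← unitCoeff_spec hc0]⟩
    by_contra! hlt
    exact hc ((pow_dvd_pow _ hlt.le).trans (pow_valuation_dvd c))

/-- Let `ℓ` be a prime and `Pi` a 2×2 matrix over `ℤ_ℓ` whose characteristic
polynomial has two distinct roots `λ, μ ∈ ℤ_ℓ`.  With `h = v_ℓ(λ - μ)`, there is a unique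
`e ≤ h` such that `Pi` is conjugate over `ℤ_ℓ` to `!![λ, ℓ^e; 0, μ]`. -/
theorem stmt0 (ℓ : ℕ) [Fact (Nat.Prime ℓ)]
    (Pi : Matrix (Fin 2) (Fin 2) ℤ_[ℓ]) (lam mu : ℤ_[ℓ])
    (hchar : Matrix.charpoly Pi = (X - C lam) * (X - C mu))
    (hne : lam ≠ mu)
    (h : ℕ) (hh : h = (lam - mu).valuation) :
    ∃! e : ℕ, e ≤ h ∧
      ∃ U : GL (Fin 2) ℤ_[ℓ],
        (↑(U⁻¹) : Matrix (Fin 2) (Fin 2) ℤ_[ℓ]) * Pi * (↑U : Matrix (Fin 2) (Fin 2) ℤ_[ℓ])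
          = !![lam, (ℓ : ℤ_[ℓ]) ^ e; 0, mu] := by
  simp only [Units.exists_inv_mul_mul_eq_iff_isConj]
  have htrace : Pi.trace - lam = mu := by
    rw [Matrix.trace_eq_add_of_charpoly_eq hchar, add_sub_cancel_left]
  obtain ⟨c, hc⟩ := Pi.exists_isConj_upperTriangular (a := lam) (by simp [hchar])
  rw [htrace] at hc
  obtain ⟨e, he, t, w, hw⟩ := PadicInt.exists_add_mul_eq_unit_mul_pow c (sub_ne_zero.2 hne)
  have hdvd : ∀ {k}, k ≤ h → (ℓ : ℤ_[ℓ]) ^ k ∣ mu - lam := fun hk =>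
    (pow_dvd_pow _ (hh ▸ hk)).trans
      ((PadicInt.pow_valuation_dvd _).trans (dvd_sub_comm.1 dvd_rfl))
  have hle : ∀ {e f}, e ≤ h → IsConj Pi !![lam, (ℓ : ℤ_[ℓ]) ^ e; 0, mu] →
      IsConj Pi !![lam, (ℓ : ℤ_[ℓ]) ^ f; 0, mu] → e ≤ f := fun he hPe hPf =>
    (pow_dvd_pow_iff PadicInt.prime_p.ne_zero PadicInt.prime_p.not_isUnit).1
      (Matrix.dvd_of_isConj_upperTriangular (hPe.symm.trans hPf) dvd_rfl (hdvd he))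
  have hPe : IsConj Pi !![lam, (ℓ : ℤ_[ℓ]) ^ e; 0, mu] :=
    hc.trans (Matrix.isConj_upperTriangular_of_mul_eq w t hw.symm)
  exact ⟨e, ⟨hh ▸ he, hPe⟩, fun f ⟨hf, hPf⟩ =>
    le_antisymm (hle hf hPf hPe) (hle (hh ▸ he) hPe hPf)⟩
end

section
/- Let ℓ be a prime, λ, μ ∈ ℤ_ℓ with λ ≠ μ, h = v_ℓ(λ − μ), and a, a' ∈ ℤ_ℓ. The upper-triangular matrices with rows (λ, a), (0, μ) and (λ, a'), (0, μ) respectively are conjugate over ℤ_ℓ if and only if min(v_ℓ(a), h) = min(v_ℓ(a'), h). In particular, conjugating the matrix with rows (λ, a), (0, μ) by the unipotent matrix with rows (1, b), (0, 1) replaces a by a − b(λ − μ), and conjugating by the diagonal matrix diag(c, 1) with c ∈ ℤ_ℓˣ replaces a by c·a. -/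
open Classical

/-- `min(v_ℓ(a), h)` with the convention `v_ℓ(0) = ∞`, so that `minVal 0 h = h`. -/
noncomputable def minVal (ℓ : ℕ) [Fact (Nat.Prime ℓ)] (a : ℤ_[ℓ]) (h : ℕ) : ℕ :=
  if a = 0 then h else min a.valuation h

/-!
Over any local domain, conjugacy of `!![λ, a; 0, μ]` and `!![λ, a'; 0, μ]` is detected by the
ideal `(a, λ - μ)`. A conjugating matrix `P` satisfies `(λ - μ) P₁₀ = 0`, so it is upper
triangular with unit diagonal, and its `(0, 1)` entry exhibits `a' ∈ (a, λ - μ)`. Conversely,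
in a local ring `(a, d) = (a', d)` forces `a' = c a + b d` with `c` a unit, and this change of
`a` is realised by conjugating with `diag(c, 1)` and then with a unipotent matrix. Finally, in
`ℤ_ℓ` the ideal `(a, λ - μ)` is `(ℓ ^ min(v_ℓ(a), h))`.
-/

section Monoid

variable {M : Type*} [Monoid M]

theorem exists_units_inv_mul_mul_eq_iff_isConj {A B : M} :
    (∃ U : Mˣ, ↑U⁻¹ * A * ↑U = B) ↔ IsConj A B := by
  constructor
  · rintro ⟨U, rfl⟩
    exact ⟨U⁻¹, by simp [SemiconjBy, mul_assoc]⟩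
  · rintro ⟨c, hc⟩
    exact ⟨c⁻¹, by rw [inv_inv, hc.eq, mul_assoc, Units.mul_inv, mul_one]⟩

theorem isConj_of_mul_mul_eq {A B P Q : M} (h : P * A * Q = B) (hPQ : P * Q = 1)
    (hQP : Q * P = 1) : IsConj A B :=
  ⟨⟨P, Q, hPQ, hQP⟩, by simp [SemiconjBy, ← h, mul_assoc, hQP]⟩

end Monoid

section UpperTriangular

open Matrix

variable {R : Type*} [CommRing R] (lam mu : R)

theorem Matrix.unipotent_mul_upper_mul_fin_two (a b : R) :
    !![1, b; 0, 1] * !![lam, a; 0, mu] * !![1, -b; 0, 1] = !![lam, a - b * (lam - mu); 0, mu] := by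
  ext i j
  fin_cases i <;> fin_cases j <;> simp
  ring

theorem Matrix.diagonal_mul_upper_mul_fin_two (a : R) (c : Rˣ) :
    !![(c : R), 0; 0, 1] * !![lam, a; 0, mu] * !![((c⁻¹ : Rˣ) : R), 0; 0, 1]
      = !![lam, c * a; 0, mu] := by
  ext i j
  fin_cases i <;> fin_cases j <;> simp [mul_comm lam, mul_assoc]

theorem isConj_upper_fin_two_of_eq_unit_mul_add (a : R) (c : Rˣ) (b : R) :
    IsConj !![lam, a; 0, mu] !![lam, c * a + b * (lam - mu); 0, mu] := by
  have h := (isConj_of_mul_mul_eq (diagonal_mul_upper_mul_fin_two lam mu a c)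
    (by simp [one_fin_two]) (by simp [one_fin_two])).trans
    (isConj_of_mul_mul_eq (unipotent_mul_upper_mul_fin_two lam mu (c * a) (-b))
    (by simp [one_fin_two]) (by simp [one_fin_two]))
  rwa [neg_mul, sub_neg_eq_add] at h

theorem mem_span_pair_of_isConj_upper_fin_two [IsDomain R] (hne : lam ≠ mu) {a a' : R}
    (hconj : IsConj !![lam, a; 0, mu] !![lam, a'; 0, mu]) :
    a' ∈ Ideal.span {a, lam - mu} := by
  obtain ⟨⟨P, Q, hPQ, _⟩, hP⟩ := hconj
  have h10 := congr_fun₂ hP.eq 1 0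
  have h01 := congr_fun₂ hP.eq 0 1
  simp only [Fin.isValue, mul_apply, of_apply, cons_val', cons_val_zero, cons_val_fin_one,
    Fin.sum_univ_two, cons_val_one, mul_zero, add_zero, zero_mul, zero_add] at h10 h01
  have hP10 : P 1 0 = 0 :=
    (mul_eq_zero.1 (show (lam - mu) * P 1 0 = 0 by linear_combination h10)).resolve_left
      (sub_ne_zero.2 hne)
  have hdet := isUnit_det_of_right_inverse hPQ
  rw [det_fin_two, hP10, mul_zero, sub_zero] at hdet
  obtain ⟨u, hu⟩ := isUnit_of_mul_isUnit_right hdet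
  rw [← hu] at h01
  refine Ideal.mem_span_pair.2 ⟨↑u⁻¹ * P 0 0, -(↑u⁻¹ * P 0 1), ?_⟩
  linear_combination ↑u⁻¹ * h01 + a' * u.inv_mul

/- If the coefficient `r` of `a` is not a unit, then `1 - r r'` is one, which forces `a'`
(and then `a`) into `(d)`. -/
theorem exists_unit_mul_add_of_span_pair_eq [IsLocalRing R] {a a' d : R}
    (h : Ideal.span {a, d} = Ideal.span {a', d}) : ∃ (c : Rˣ) (b : R), a' = c * a + b * d := by
  have ha' : a' ∈ Ideal.span {a, d} := h ▸ Ideal.subset_span (by simp)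
  have ha : a ∈ Ideal.span {a', d} := h ▸ Ideal.subset_span (by simp)
  obtain ⟨r, s, hrs⟩ := Ideal.mem_span_pair.1 ha'
  by_cases hr : IsUnit r
  · obtain ⟨c, rfl⟩ := hr
    exact ⟨c, s, hrs.symm⟩
  obtain ⟨r', s', hrs'⟩ := Ideal.mem_span_pair.1 ha
  obtain ⟨u, hu⟩ := IsLocalRing.isUnit_one_sub_self_of_mem_nonunits (r * r')
    (mul_mem_nonunits_left hr)
  have ha'_dvd : a' = (↑u⁻¹ * (r * s' + s)) * d := by
    linear_combination
      -a' * u.inv_mul - ↑u⁻¹ * hrs - ↑u⁻¹ * r * hrs' + ↑u⁻¹ * a' * hu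
  refine ⟨1, ↑u⁻¹ * (r * s' + s) * (1 - r') - s', ?_⟩
  rw [Units.val_one]
  linear_combination (1 - r') * ha'_dvd + hrs'

theorem isConj_upper_fin_two_iff_span_pair_eq [IsDomain R] [IsLocalRing R] (hne : lam ≠ mu)
    {a a' : R} :
    IsConj !![lam, a; 0, mu] !![lam, a'; 0, mu] ↔
      Ideal.span {a, lam - mu} = Ideal.span {a', lam - mu} := by
  have span_le {x y : R} (hxy : IsConj !![lam, x; 0, mu] !![lam, y; 0, mu]) :
      Ideal.span {y, lam - mu} ≤ Ideal.span {x, lam - mu} :=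
    Ideal.span_le.2 <| Set.insert_subset_iff.2
      ⟨mem_span_pair_of_isConj_upper_fin_two lam mu hne hxy,
        Set.singleton_subset_iff.2 (Ideal.subset_span (by simp))⟩
  refine ⟨fun hconj => le_antisymm (span_le hconj.symm) (span_le hconj), fun h => ?_⟩
  obtain ⟨c, b, rfl⟩ := exists_unit_mul_add_of_span_pair_eq h
  exact isConj_upper_fin_two_of_eq_unit_mul_add lam mu a c b

end UpperTriangular

namespace PadicInt

variable {ℓ : ℕ} [Fact ℓ.Prime]

theorem pow_p_dvd_iff_le_valuation {x : ℤ_[ℓ]} (hx : x ≠ 0) (n : ℕ) :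
    (ℓ : ℤ_[ℓ]) ^ n ∣ x ↔ n ≤ x.valuation := by
  rw [← Ideal.mem_span_singleton, mem_span_pow_iff_le_valuation x hx]

theorem pow_p_dvd_and_pow_p_dvd_iff_le_minVal {d : ℤ_[ℓ]} (hd : d ≠ 0) (a : ℤ_[ℓ])
    (k : ℕ) : (ℓ : ℤ_[ℓ]) ^ k ∣ a ∧ (ℓ : ℤ_[ℓ]) ^ k ∣ d ↔ k ≤ minVal ℓ a d.valuation := by
  rw [minVal, pow_p_dvd_iff_le_valuation hd]
  split_ifs with ha
  · simp [ha]
  · rw [pow_p_dvd_iff_le_valuation ha, le_min_iff]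

theorem span_pow_p_injective :
    Function.Injective fun n : ℕ => Ideal.span {(ℓ : ℤ_[ℓ]) ^ n} := by
  intro m n hmn
  simp only [le_antisymm_iff, Ideal.span_singleton_le_span_singleton,
    pow_dvd_pow_iff prime_p.ne_zero prime_p.not_isUnit] at hmn
  exact le_antisymm hmn.2 hmn.1

theorem span_pair_eq_span_pow_p_minVal {d : ℤ_[ℓ]} (hd : d ≠ 0) (a : ℤ_[ℓ]) :
    Ideal.span {a, d} = Ideal.span {(ℓ : ℤ_[ℓ]) ^ minVal ℓ a d.valuation} := by
  have hne : Ideal.span {a, d} ≠ ⊥ := fun h =>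
    hd <| Ideal.span_singleton_eq_bot.1 (le_bot_iff.1 (h ▸ Ideal.span_mono (by simp)))
  obtain ⟨n, hn⟩ := ideal_eq_span_pow_p hne
  suffices n = minVal ℓ a d.valuation by rw [hn, this]
  refine eq_of_forall_le_iff fun k => ?_
  rw [← pow_p_dvd_and_pow_p_dvd_iff_le_minVal hd,
    ← pow_dvd_pow_iff (prime_p (p := ℓ)).ne_zero prime_p.not_isUnit,
    ← Ideal.span_singleton_le_span_singleton, ← hn, Ideal.span_le, Set.insert_subset_iff,
    Set.singleton_subset_iff, SetLike.mem_coe, SetLike.mem_coe, Ideal.mem_span_singleton,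
    Ideal.mem_span_singleton]

end PadicInt

/-- Let `ℓ` be a prime, `λ ≠ μ` in `ℤ_ℓ`, `h = v_ℓ(λ-μ)`, and `a, a' ∈ ℤ_ℓ`.
The matrices `!![λ, a; 0, μ]` and `!![λ, a'; 0, μ]` are conjugate over `ℤ_ℓ` iff
`min(v_ℓ(a), h) = min(v_ℓ(a'), h)`.  Moreover, conjugating `!![λ, a; 0, μ]` by the unipotent
matrix `!![1, b; 0, 1]` replaces `a` by `a - b(λ - μ)`, and conjugating by `diag(c, 1)` with
`c ∈ ℤ_ℓˣ` replaces `a` by `c·a`. -/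
theorem stmt2 (ℓ : ℕ) [Fact (Nat.Prime ℓ)] (lam mu : ℤ_[ℓ]) (hne : lam ≠ mu)
    (h : ℕ) (hh : h = (lam - mu).valuation) (a a' : ℤ_[ℓ]) :
    ((∃ U : GL (Fin 2) ℤ_[ℓ],
        (↑(U⁻¹) : Matrix (Fin 2) (Fin 2) ℤ_[ℓ]) * !![lam, a; 0, mu]
            * (↑U : Matrix (Fin 2) (Fin 2) ℤ_[ℓ])
          = !![lam, a'; 0, mu])
      ↔ minVal ℓ a h = minVal ℓ a' h)
    ∧ (∀ b : ℤ_[ℓ],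
        !![1, b; 0, 1] * !![lam, a; 0, mu] * !![1, -b; 0, 1]
          = !![lam, a - b * (lam - mu); 0, mu])
    ∧ (∀ c : ℤ_[ℓ]ˣ,
        !![(c : ℤ_[ℓ]), 0; 0, 1] * !![lam, a; 0, mu] * !![((c⁻¹ : ℤ_[ℓ]ˣ) : ℤ_[ℓ]), 0; 0, 1]
          = !![lam, (c : ℤ_[ℓ]) * a; 0, mu]) := by
  have hd : lam - mu ≠ 0 := sub_ne_zero.2 hne
  refine ⟨?_, Matrix.unipotent_mul_upper_mul_fin_two lam mu a,
    Matrix.diagonal_mul_upper_mul_fin_two lam mu a⟩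
  rw [exists_units_inv_mul_mul_eq_iff_isConj, isConj_upper_fin_two_iff_span_pair_eq lam mu hne, hh,
    PadicInt.span_pair_eq_span_pow_p_minVal hd, PadicInt.span_pair_eq_span_pow_p_minVal hd]
  exact PadicInt.span_pow_p_injective.eq_iff
end

section
/- Let ℓ be an odd prime, λ, μ ∈ ℤ_ℓ with λ ≡ μ ≡ 1 (mod ℓ), μ ≠ 1, and β = v_ℓ(μ − 1) ≤ v_ℓ(λ − 1). For k ≥ 1, consider the action on (ℤ/ℓ^kℤ)² of the cyclic group generated by the automorphism σ : (x, y) ↦ (λ·x, μ·y). Then the number of orbits of this action is at most k·ℓ^{k+β}. -/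
/-!
Projecting to the second coordinate, an orbit of `⟨σ⟩` on `(ℤ/ℓ^k)²` is determined by an orbit of
multiplication by `μ` on `ℤ/ℓ^k` together with a first coordinate, so it suffices to show that
multiplication by `μ` has at most `k ℓ^β` orbits on `ℤ/ℓ^k`. Lifting the exponent (`ℓ` odd) shows
that `μ^n - 1` is associated to `ℓ^(β + v_ℓ(n))` in `ℤ_ℓ`. Hence multiplication by `μ` has order
`ℓ^(k-β)` on `ℤ/ℓ^k` (with `k - β` truncated at `0`) and its `n`-th power fixes at most
`ℓ^(β + v_ℓ(n))` points, so Burnside's lemma bounds the number of orbits by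
`ℓ^β · ℓ^-(k-β) · ∑_{n=1}^{ℓ^(k-β)} ℓ^(v_ℓ(n)) ≤ (k-β+1) ℓ^β ≤ k ℓ^β`.
-/

open Finset MulAction Subgroup Equiv

theorem card_orbitRel_zpowers_mul_orderOf {α : Type*} [Finite α] (τ : Perm α) :
    Nat.card (orbitRel.Quotient (zpowers τ) α) * orderOf τ =
      ∑ i ∈ range (orderOf τ), Nat.card (Function.fixedPoints ⇑(τ ^ i)) := by
  classical
  have := Fintype.ofFinite α
  have hτ : IsOfFinOrder τ := isOfFinOrder_of_finite τ
  have burnside := sum_card_fixedBy_eq_card_orbits_mul_card_group (zpowers τ) α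
  simp only [← Nat.card_eq_fintype_card, Nat.card_zpowers] at burnside
  rw [← burnside, ← (finEquivZPowers hτ).sum_comp, ← Fin.sum_univ_eq_sum_range]
  rfl

theorem card_orbitRel_zpowers_prod_le {X Y : Type*} [Finite X] [Finite Y]
    (σ : Perm (X × Y)) (τ : Perm Y) (h : ∀ q, (σ q).2 = τ q.2) :
    Nat.card (orbitRel.Quotient (zpowers σ) (X × Y)) ≤
      Nat.card X * Nat.card (orbitRel.Quotient (zpowers τ) Y) := by
  have hpow : ∀ (n : ℕ) q, ((σ ^ n) q).2 = (τ ^ n) q.2 := fun n q => by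
    rw [Perm.coe_pow, Perm.coe_pow]
    exact Function.Semiconj.iterate_right h n q
  rw [← Nat.card_prod]
  refine Nat.card_le_card_of_surjective
    (fun xP => (⟦(xP.1, xP.2.out)⟧ : orbitRel.Quotient (zpowers σ) (X × Y))) ?_
  rintro ⟨x, y⟩
  obtain ⟨⟨g, hg⟩, hgy⟩ := Quotient.mk_out (s := orbitRel (zpowers τ) Y) y
  obtain ⟨n, rfl⟩ := mem_powers_iff_mem_zpowers.mpr hg
  refine ⟨(((σ ^ n) (x, y)).1, ⟦y⟧), Quotient.sound ⟨⟨σ ^ n, npow_mem_zpowers σ n⟩, ?_⟩⟩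
  exact Prod.ext rfl ((hpow n (x, y)).trans hgy)

theorem sum_range_pow_padicValNat_succ_le (p m : ℕ) [hp : Fact p.Prime] :
    ∑ i ∈ range (p ^ m), p ^ padicValNat p (i + 1) ≤ (m + 1) * p ^ m := by
  have hv : ∀ i ∈ range (p ^ m), padicValNat p (i + 1) ∈ range (m + 1) := fun i hi => by
    have := (Nat.le_of_dvd i.succ_pos (pow_padicValNat_dvd (p := p))).trans (mem_range.mp hi)
    exact mem_range_succ_iff.mpr ((Nat.pow_le_pow_iff_right hp.out.one_lt).mp this)
  calc ∑ i ∈ range (p ^ m), p ^ padicValNat p (i + 1)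
      ≤ ∑ i ∈ range (p ^ m), ∑ s ∈ range (m + 1), if p ^ s ∣ i + 1 then p ^ s else 0 :=
        sum_le_sum fun i hi => by
          simpa [pow_padicValNat_dvd] using single_le_sum
            (f := fun s => if p ^ s ∣ i + 1 then p ^ s else 0) (fun _ _ => Nat.zero_le _) (hv i hi)
    _ = ∑ s ∈ range (m + 1), #{i ∈ range (p ^ m) | p ^ s ∣ i + 1} * p ^ s := by
        rw [sum_comm]
        simp only [← sum_filter, sum_const, smul_eq_mul]
    _ = ∑ s ∈ range (m + 1), p ^ m := sum_congr rfl fun s hs => by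
        rw [Nat.card_multiples, Nat.div_mul_cancel (pow_dvd_pow p (mem_range_succ_iff.mp hs))]
    _ = (m + 1) * p ^ m := by simp

namespace PadicInt

variable {p : ℕ} [hp : Fact p.Prime]

theorem isUnit_of_not_dvd {x : ℤ_[p]} (hx : ¬(p : ℤ_[p]) ∣ x) : IsUnit x :=
  isUnit_iff.mpr <| (norm_le_one x).antisymm <| not_lt.mp <| mt (norm_lt_one_iff_dvd x).mp hx

theorem natCast_dvd_natCast_iff {n : ℕ} : (p : ℤ_[p]) ∣ n ↔ p ∣ n := by
  rw [← norm_lt_one_iff_dvd, norm_natCast_lt_one_iff]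

theorem associated_pow_valuation {x : ℤ_[p]} (hx : x ≠ 0) : Associated x (p ^ x.valuation) :=
  Associated.symm ⟨unitCoeff hx, by rw [mul_comm, ← unitCoeff_spec hx]⟩

theorem valuation_natCast (n : ℕ) : (n : ℤ_[p]).valuation = padicValNat p n := by
  have := valuation_coe (n : ℤ_[p])
  rw [coe_natCast, Padic.valuation_natCast] at this
  exact_mod_cast this.symm

theorem not_dvd_of_dvd_sub_one {x : ℤ_[p]} (hx : (p : ℤ_[p]) ∣ x - 1) : ¬(p : ℤ_[p]) ∣ x :=
  fun h => prime_p.not_dvd_one ((dvd_sub_right h).mp hx)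

theorem associated_geom_sum_prime (hodd : Odd p) {y : ℤ_[p]} (hy : (p : ℤ_[p]) ∣ y - 1) :
    Associated (∑ i ∈ range p, y ^ i) (p : ℤ_[p]) := by
  have h := emultiplicity_geom_sum₂_eq_one prime_p hodd hy (not_dvd_of_dvd_sub_one hy)
  simp only [one_pow, mul_one] at h
  obtain ⟨⟨t, ht⟩, hsq⟩ := emultiplicity_eq_coe.mp (by exact_mod_cast h : _ = ((1 : ℕ) : ℕ∞))
  rw [pow_one] at ht
  have ht' : ¬(p : ℤ_[p]) ∣ t := fun ⟨s, hs⟩ => hsq ⟨s, by rw [ht, hs]; ring⟩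
  rw [ht]
  exact (associated_mul_unit_right _ _ (isUnit_of_not_dvd ht')).symm

theorem associated_pow_sub_one (hodd : Odd p) {x : ℤ_[p]} (hx : (p : ℤ_[p]) ∣ x - 1) (n : ℕ) :
    Associated (x ^ n - 1) ((x - 1) * n) := by
  induction n using Nat.strong_induction_on with
  | _ n ih =>
  rcases eq_or_ne n 0 with rfl | hn
  · simp
  by_cases hpn : p ∣ n
  · obtain ⟨j, rfl⟩ := hpn
    have hj : j < p * j := lt_mul_left (Nat.pos_of_ne_zero (right_ne_zero_of_mul hn)) hp.out.one_lt
    have hxj : (p : ℤ_[p]) ∣ x ^ j - 1 := hx.trans (by simpa using sub_dvd_pow_sub_pow x 1 j)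
    rw [pow_mul', ← geom_sum_mul, Nat.cast_mul, mul_comm (p : ℤ_[p]), ← mul_assoc,
      mul_comm _ (p : ℤ_[p])]
    exact (associated_geom_sum_prime hodd hxj).mul_mul (ih j hj)
  · have hS : ¬(p : ℤ_[p]) ∣ ∑ i ∈ range n, x ^ i := by
      have := dvd_geom_sum₂_iff_of_dvd_sub (n := n) hx
      simp only [one_pow, mul_one] at this
      rwa [this, natCast_dvd_natCast_iff]
    rw [← geom_sum_mul, mul_comm]
    exact (associated_mul_unit_right _ _ (isUnit_of_not_dvd hS)).symm.trans
      (associated_mul_unit_right _ _ (isUnit_of_not_dvd (mt natCast_dvd_natCast_iff.mp hpn)))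

theorem associated_pow_sub_one_pow (hodd : Odd p) {x : ℤ_[p]} (hx : (p : ℤ_[p]) ∣ x - 1)
    (hx1 : x ≠ 1) {n : ℕ} (hn : n ≠ 0) :
    Associated (x ^ n - 1) ((p : ℤ_[p]) ^ ((x - 1).valuation + padicValNat p n)) := by
  rw [pow_add, ← valuation_natCast]
  exact (associated_pow_sub_one hodd hx n).trans <|
    (associated_pow_valuation (sub_ne_zero.mpr hx1)).mul_mul
      (associated_pow_valuation (Nat.cast_ne_zero.mpr hn))

end PadicInt

theorem ZMod.natCast_pow_eq_zero_iff {p : ℕ} (hp : 1 < p) (k w : ℕ) :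
    (p : ZMod (p ^ k)) ^ w = 0 ↔ k ≤ w := by
  rw [← Nat.cast_pow, ZMod.natCast_eq_zero_iff, Nat.pow_dvd_pow_iff_le_right hp]

section MulLeft

open PadicInt

variable {ℓ : ℕ} [hℓ : Fact ℓ.Prime] {k : ℕ} {μ : ℤ_[ℓ]} {τ : Perm (ZMod (ℓ ^ k))}

theorem mulLeft_pow_apply_eq_self_iff (hodd : Odd ℓ) (hμ : (ℓ : ℤ_[ℓ]) ∣ μ - 1) (hμ1 : μ ≠ 1)
    (hτ : ∀ y, τ y = toZModPow k μ * y) {n : ℕ} (hn : n ≠ 0) (y : ZMod (ℓ ^ k)) :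
    (τ ^ n) y = y ↔ (ℓ : ZMod (ℓ ^ k)) ^ ((μ - 1).valuation + padicValNat ℓ n) * y = 0 := by
  have h := (associated_pow_sub_one_pow hodd hμ hμ1 hn).map (toZModPow k)
  rw [map_sub, map_pow, map_one, map_pow, map_natCast] at h
  rw [Perm.coe_pow, show ⇑τ = (toZModPow k μ * ·) from funext hτ, mul_left_iterate_apply,
    ← sub_eq_zero, ← sub_one_mul]
  exact (h.mul_right y).eq_zero_iff

theorem orderOf_mulLeft (hodd : Odd ℓ) (hμ : (ℓ : ℤ_[ℓ]) ∣ μ - 1) (hμ1 : μ ≠ 1)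
    (hτ : ∀ y, τ y = toZModPow k μ * y) : orderOf τ = ℓ ^ (k - (μ - 1).valuation) := by
  refine Nat.dvd_right_iff_eq.mp fun n => ?_
  rw [orderOf_dvd_iff_pow_eq_one]
  rcases eq_or_ne n 0 with rfl | hn
  · simp
  rw [padicValNat_dvd_iff_le hn, Perm.ext_iff]
  simp only [Perm.coe_one, id_eq, mulLeft_pow_apply_eq_self_iff hodd hμ hμ1 hτ hn]
  constructor
  · intro h
    have := (ZMod.natCast_pow_eq_zero_iff hℓ.out.one_lt _ _).mp (by simpa using h 1)
    omega
  · intro h y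
    rw [(ZMod.natCast_pow_eq_zero_iff hℓ.out.one_lt _ _).mpr (by omega), zero_mul]

theorem card_fixedPoints_mulLeft_pow_le (hodd : Odd ℓ) (hμ : (ℓ : ℤ_[ℓ]) ∣ μ - 1) (hμ1 : μ ≠ 1)
    (hτ : ∀ y, τ y = toZModPow k μ * y) {n : ℕ} (hn : n ≠ 0) :
    Nat.card (Function.fixedPoints ⇑(τ ^ n)) ≤ ℓ ^ ((μ - 1).valuation + padicValNat ℓ n) := by
  classical
  have : NeZero (ℓ ^ k) := ⟨pow_ne_zero _ hℓ.out.ne_zero⟩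
  calc Nat.card (Function.fixedPoints ⇑(τ ^ n))
      = #{y : ZMod (ℓ ^ k) | ℓ ^ ((μ - 1).valuation + padicValNat ℓ n) • y = 0} := by
        rw [Nat.card_eq_card_toFinset]
        congr 1
        ext y
        simp [Function.IsFixedPt, mulLeft_pow_apply_eq_self_iff hodd hμ hμ1 hτ hn, nsmul_eq_mul]
    _ ≤ _ := IsAddCyclic.card_nsmul_eq_zero_le (pow_pos hℓ.out.pos _)

theorem card_orbitRel_zpowers_mulLeft_le (hodd : Odd ℓ) (hμ : (ℓ : ℤ_[ℓ]) ∣ μ - 1)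
    (hμ1 : μ ≠ 1) (hτ : ∀ y, τ y = toZModPow k μ * y) (hk : 1 ≤ k) :
    Nat.card (orbitRel.Quotient (zpowers τ) (ZMod (ℓ ^ k))) ≤ k * ℓ ^ (μ - 1).valuation := by
  set β := (μ - 1).valuation
  set m := k - β
  have hβ : 1 ≤ β := (mem_span_pow_iff_le_valuation _ (sub_ne_zero.mpr hμ1) 1).mp
    (Ideal.mem_span_singleton.mpr (by rwa [pow_one]))
  have hord : orderOf τ = ℓ ^ m := orderOf_mulLeft hodd hμ hμ1 hτ
  have hshift : ∑ i ∈ range (ℓ ^ m), Nat.card (Function.fixedPoints ⇑(τ ^ i)) =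
      ∑ i ∈ range (ℓ ^ m), Nat.card (Function.fixedPoints ⇑(τ ^ (i + 1))) := by
    have h := sum_range_succ' (fun i => Nat.card (Function.fixedPoints ⇑(τ ^ i))) (ℓ ^ m)
    rw [sum_range_succ, ← hord, pow_orderOf_eq_one, pow_zero, hord] at h
    omega
  refine Nat.le_of_mul_le_mul_right (?_ : _ * ℓ ^ m ≤ _ * ℓ ^ m) (pow_pos hℓ.out.pos m)
  calc Nat.card (orbitRel.Quotient (zpowers τ) (ZMod (ℓ ^ k))) * ℓ ^ m
      = ∑ i ∈ range (ℓ ^ m), Nat.card (Function.fixedPoints ⇑(τ ^ (i + 1))) := by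
        rw [← hshift, ← hord, card_orbitRel_zpowers_mul_orderOf]
    _ ≤ ∑ i ∈ range (ℓ ^ m), ℓ ^ β * ℓ ^ padicValNat ℓ (i + 1) := sum_le_sum fun i _ =>
        (card_fixedPoints_mulLeft_pow_le hodd hμ hμ1 hτ i.succ_ne_zero).trans_eq (pow_add _ _ _)
    _ ≤ ℓ ^ β * ((m + 1) * ℓ ^ m) := by
        rw [← mul_sum]
        exact Nat.mul_le_mul_left _ (sum_range_pow_padicValNat_succ_le ℓ m)
    _ ≤ k * ℓ ^ β * ℓ ^ m := by
        rw [mul_comm k, mul_assoc]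
        exact Nat.mul_le_mul_left _ (Nat.mul_le_mul_right _ (by omega))

end MulLeft

theorem stmt9_general (ℓ : ℕ) [Fact (Nat.Prime ℓ)] (hodd : ℓ ≠ 2)
    (lam mu : ℤ_[ℓ]) (hmu : (ℓ : ℤ_[ℓ]) ∣ (mu - 1))
    (hmne : mu ≠ 1) (β : ℕ) (hβ : β = (mu - 1).valuation)
    (k : ℕ) (hk : 1 ≤ k)
    (σ : Equiv.Perm (ZMod (ℓ ^ k) × ZMod (ℓ ^ k)))
    (hσ : ∀ p : ZMod (ℓ ^ k) × ZMod (ℓ ^ k),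
      σ p = (PadicInt.toZModPow k lam * p.1, PadicInt.toZModPow k mu * p.2)) :
    Nat.card
        (MulAction.orbitRel.Quotient (Subgroup.zpowers σ) (ZMod (ℓ ^ k) × ZMod (ℓ ^ k)))
      ≤ k * ℓ ^ (k + β) := by
  subst hβ
  have : NeZero (ℓ ^ k) := ⟨pow_ne_zero _ (Fact.out : ℓ.Prime).ne_zero⟩
  have hunit : IsUnit (PadicInt.toZModPow k mu) :=
    (PadicInt.isUnit_of_not_dvd (PadicInt.not_dvd_of_dvd_sub_one hmu)).map _
  calc _ ≤ Nat.card (ZMod (ℓ ^ k)) *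
        Nat.card (orbitRel.Quotient (zpowers (Units.mulLeft hunit.unit)) (ZMod (ℓ ^ k))) :=
        card_orbitRel_zpowers_prod_le σ _ fun q => by rw [hσ]; rfl
    _ ≤ ℓ ^ k * (k * ℓ ^ (mu - 1).valuation) := by
        rw [Nat.card_zmod]
        exact Nat.mul_le_mul_left _ <| card_orbitRel_zpowers_mulLeft_le
          ((Fact.out : ℓ.Prime).odd_of_ne_two hodd) hmu hmne (fun _ => rfl) hk
    _ = k * ℓ ^ (k + (mu - 1).valuation) := by ring

/-- Let `ℓ` be an odd prime, `λ, μ ∈ ℤ_ℓ` with `λ ≡ μ ≡ 1 (mod ℓ)`,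
`μ ≠ 1`, and `β = v_ℓ(μ-1) ≤ v_ℓ(λ-1)`.  For `k ≥ 1` and `σ` the automorphism
`(x, y) ↦ (λx, μy)` of `(ℤ/ℓ^kℤ)²`, the number of orbits of the cyclic group
generated by `σ` is at most `k·ℓ^(k+β)`. -/
theorem stmt9 (ℓ : ℕ) [Fact (Nat.Prime ℓ)] (hodd : ℓ ≠ 2)
    (lam mu : ℤ_[ℓ]) (hlam : (ℓ : ℤ_[ℓ]) ∣ (lam - 1)) (hmu : (ℓ : ℤ_[ℓ]) ∣ (mu - 1))
    (hmne : mu ≠ 1) (β : ℕ) (hβ : β = (mu - 1).valuation)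
    (hβle : (mu - 1).valuation ≤ (lam - 1).valuation)
    (k : ℕ) (hk : 1 ≤ k)
    (σ : Equiv.Perm (ZMod (ℓ ^ k) × ZMod (ℓ ^ k)))
    (hσ : ∀ p : ZMod (ℓ ^ k) × ZMod (ℓ ^ k),
      σ p = (PadicInt.toZModPow k lam * p.1, PadicInt.toZModPow k mu * p.2)) :
    Nat.card
        (MulAction.orbitRel.Quotient (Subgroup.zpowers σ) (ZMod (ℓ ^ k) × ZMod (ℓ ^ k)))
      ≤ k * ℓ ^ (k + β) :=
  stmt9_general ℓ hodd lam mu hmu hmne β hβ k hk σ hσ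
end

section
/- Let ℓ be an odd prime, λ, μ ∈ ℤ_ℓ with λ ≡ μ ≡ 1 (mod ℓ), λ ≠ 1, μ ≠ 1, and set α = v_ℓ(λ − 1) ≥ 1, β = v_ℓ(μ − 1) ≥ 1. Fix k ≥ 1 and let σ be the automorphism of (ℤ/ℓ^kℤ)² given by (x, y) ↦ (λx, μy). For integers 0 ≤ i, j ≤ k − 1, the set S(i,j) of pairs (x, y) ∈ (ℤ/ℓ^kℤ)² such that x has additive order exactly ℓ^{i+1} and y has additive order exactly ℓ^{j+1} is stable under σ; every orbit of ⟨σ⟩ contained in S(i,j) has cardinality ℓ^{ρ(i,j)} where ρ(i,j) = max(0, i − α + 1, j − β + 1), and the number of such orbits is (ℓ−1)²·ℓ^{ν(i,j)} where ν(i,j) = min(i + j, i + β − 1, j + α − 1) = i + j − ρ(i,j). -/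
/-!
Since `λ ≡ 1 (mod ℓ)` and `ℓ` is odd, lifting the exponent gives `v_ℓ(λⁿ - 1) = α + v_ℓ(n)`, so
`λⁿ` fixes an element of additive order `ℓ^(i+1)` exactly when `ℓ^(i+1-α) ∣ n`. Hence `σⁿ` fixes a
point of `S(i,j)` iff `ℓ^ρ ∣ n`, so every orbit in the `σ`-stable set `S(i,j)` has `ℓ^ρ` elements,
and the number of orbits is `|S(i,j)| / ℓ^ρ = (ℓ-1)² ℓ^(i+j) / ℓ^ρ`.
-/

open PadicInt MulAction

theorem IsUnit.addOrderOf_mul {R : Type*} [Semiring R] {u : R} (hu : IsUnit u) (x : R) :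
    addOrderOf (u * x) = addOrderOf x :=
  addOrderOf_injective (AddMonoidHom.mulLeft u) hu.mul_right_injective x

theorem ZMod.card_addOrderOf_eq_totient {n d : ℕ} [NeZero n] (hd : d ∣ n) :
    Nat.card {x : ZMod n // addOrderOf x = d} = d.totient := by
  classical
  rw [Nat.card_eq_fintype_card,
    ← IsAddCyclic.card_addOrderOf_eq_totient (α := ZMod n) (by rwa [ZMod.card]),
    Fintype.card_subtype]

theorem ZMod.card_addOrderOf_prod_eq_totient_mul {n d e : ℕ} [NeZero n] (hd : d ∣ n) (he : e ∣ n) :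
    Nat.card {q : ZMod n × ZMod n | addOrderOf q.1 = d ∧ addOrderOf q.2 = e} =
      d.totient * e.totient := by
  refine (Nat.card_congr (Equiv.subtypeProdEquivProd (p := fun x => addOrderOf x = d)
    (q := fun y => addOrderOf y = e))).trans ?_
  rw [Nat.card_prod, card_addOrderOf_eq_totient hd, card_addOrderOf_eq_totient he]

theorem pow_max_dvd_iff {M : Type*} [Monoid M] (a x : M) (s t : ℕ) :
    a ^ max s t ∣ x ↔ a ^ s ∣ x ∧ a ^ t ∣ x := by
  rcases le_total s t with h | h
  · rw [max_eq_right h]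
    exact ⟨fun hx => ⟨(pow_dvd_pow a h).trans hx, hx⟩, And.right⟩
  · rw [max_eq_left h]
    exact ⟨fun hx => ⟨hx, (pow_dvd_pow a h).trans hx⟩, And.left⟩

theorem Equiv.Perm.pow_apply_of_apply_eq_mul {M : Type*} [Monoid M] {σ : Equiv.Perm (M × M)}
    {a b : M} (hσ : ∀ q, σ q = (a * q.1, b * q.2)) (n : ℕ) (q : M × M) :
    (σ ^ n) q = (a ^ n * q.1, b ^ n * q.2) := by
  induction n with
  | zero => simp
  | succ n ih =>
    rw [pow_succ', Equiv.Perm.mul_apply, ih, hσ, pow_succ', pow_succ', mul_assoc, mul_assoc]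

theorem Equiv.Perm.addOrderOf_apply_of_mem_zpowers {R : Type*} [Semiring R] [Finite R]
    {σ : Equiv.Perm (R × R)} {a b : R} (ha : IsUnit a) (hb : IsUnit b)
    (hσ : ∀ q, σ q = (a * q.1, b * q.2)) {g : Equiv.Perm (R × R)} (hg : g ∈ Subgroup.zpowers σ)
    (q : R × R) : addOrderOf (g q).1 = addOrderOf q.1 ∧ addOrderOf (g q).2 = addOrderOf q.2 := by
  obtain ⟨n, rfl⟩ := mem_powers_iff_mem_zpowers.2 hg
  rw [pow_apply_of_apply_eq_mul hσ]
  exact ⟨(ha.pow n).addOrderOf_mul _, (hb.pow n).addOrderOf_mul _⟩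

namespace MulAction

variable {G X : Type*} [Group G] [MulAction G X]

theorem card_orbit_zpowers_of_forall_pow_smul_eq_iff {g : G} {x : X} {d : ℕ}
    (h : ∀ n : ℕ, g ^ n • x = x ↔ d ∣ n) : Nat.card (orbit (Subgroup.zpowers g) x) = d := by
  rw [Nat.card_congr (orbitZPowersEquiv g x), Nat.card_zmod, ← period_eq_minimalPeriod]
  exact Nat.dvd_right_iff_eq.1 fun n => by rw [← pow_smul_eq_iff_period_dvd, h]

theorem card_orbits_meeting_mul_eq_card [Finite X] {S : Set X} (hS : ∀ g : G, ∀ x ∈ S, g • x ∈ S)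
    {d : ℕ} (hd : ∀ x ∈ S, Nat.card (orbit G x) = d) :
    Nat.card {ω : orbitRel.Quotient G X // ∃ x ∈ S, Quotient.mk (orbitRel G X) x = ω} * d =
      Nat.card S := by
  set T := {ω : orbitRel.Quotient G X // ∃ x ∈ S, Quotient.mk (orbitRel G X) x = ω}
  have := Fintype.ofFinite T
  let q : S → T := fun s => ⟨Quotient.mk _ s, s, s.2, rfl⟩
  have hfib : ∀ t : T, Nat.card {s : S // q s = t} = d := by
    rintro ⟨_, x, hx, rfl⟩
    rw [← hd x hx]
    refine Nat.card_congr ((Equiv.subtypeEquivRight fun s => ?_).trans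
      (Equiv.subtypeSubtypeEquivSubtype fun {y} hy => ?_))
    · rw [Subtype.ext_iff, Quotient.eq, orbitRel_apply]
    · obtain ⟨g, rfl⟩ := hy
      exact hS g x hx
  rw [Nat.card_congr (Equiv.sigmaFiberEquiv q).symm, Nat.card_sigma, Finset.sum_congr rfl
    fun t _ => hfib t, Finset.sum_const, Finset.card_univ, smul_eq_mul, Nat.card_eq_fintype_card]

end MulAction

namespace PadicInt

variable {p : ℕ} [Fact p.Prime]

theorem emultiplicity_p_eq_valuation {x : ℤ_[p]} (hx : x ≠ 0) :
    emultiplicity (p : ℤ_[p]) x = x.valuation := by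
  refine emultiplicity_eq_coe.2 ⟨?_, ?_⟩ <;>
    simp [← Ideal.mem_span_singleton, mem_span_pow_iff_le_valuation x hx]

theorem isUnit_of_dvd_sub_one {x : ℤ_[p]} (hx : (p : ℤ_[p]) ∣ x - 1) : IsUnit x := by
  have hmem : 1 - x ∈ nonunits ℤ_[p] := by
    rw [mem_nonunits, norm_lt_one_iff_dvd, ← neg_sub, dvd_neg]
    exact hx
  simpa using IsLocalRing.isUnit_one_sub_self_of_mem_nonunits _ hmem

theorem emultiplicity_pow_sub_pow (hp : p ≠ 2) {x y : ℤ_[p]} (hxy : (p : ℤ_[p]) ∣ x - y)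
    (hx : ¬(p : ℤ_[p]) ∣ x) (n : ℕ) :
    emultiplicity (p : ℤ_[p]) (x ^ n - y ^ n) =
      emultiplicity (p : ℤ_[p]) (x - y) + emultiplicity p n := by
  have hp' : p.Prime := Fact.out
  rcases eq_or_ne n 0 with rfl | hn
  · simp
  obtain ⟨a, m, hm, rfl⟩ := Nat.exists_eq_pow_mul_and_not_dvd hn p hp'.ne_one
  have hm' : ¬(p : ℤ_[p]) ∣ (m : ℤ_[p]) := by
    simpa using (pow_p_dvd_int_iff 1 m).not.2 (by simpa [Int.natCast_dvd_natCast] using hm)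
  have hxa : ¬(p : ℤ_[p]) ∣ x ^ p ^ a := fun h => hx (prime_p.dvd_of_dvd_pow h)
  have hxya : (p : ℤ_[p]) ∣ x ^ p ^ a - y ^ p ^ a := hxy.trans (sub_dvd_pow_sub_pow _ _ _)
  rw [pow_mul, pow_mul, emultiplicity_pow_sub_pow_of_prime prime_p hxya hxa hm',
    emultiplicity_pow_prime_pow_sub_pow_prime_pow prime_p (hp'.odd_of_ne_two hp)
      hxy hx, emultiplicity_mul hp'.prime, emultiplicity_pow_self_of_prime hp'.prime,
    emultiplicity_eq_zero.2 hm, add_zero]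

theorem pow_dvd_pow_sub_one_iff (hp : p ≠ 2) {c : ℤ_[p]} (hc : (p : ℤ_[p]) ∣ c - 1) (hc1 : c ≠ 1)
    (m n : ℕ) : (p : ℤ_[p]) ^ m ∣ c ^ n - 1 ↔ p ^ (m - (c - 1).valuation) ∣ n := by
  have hc0 : c - 1 ≠ 0 := sub_ne_zero.2 hc1
  have hcp : ¬(p : ℤ_[p]) ∣ c := fun h =>
    prime_p.not_isUnit (isUnit_of_dvd_unit h (isUnit_of_dvd_sub_one hc))
  have hlte := emultiplicity_pow_sub_pow hp hc hcp n
  rw [one_pow] at hlte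
  rw [pow_dvd_iff_le_emultiplicity, hlte, emultiplicity_p_eq_valuation hc0,
    pow_dvd_iff_le_emultiplicity, ENat.natCast_sub, tsub_le_iff_left]

theorem one_le_valuation_of_dvd {x : ℤ_[p]} (hx : x ≠ 0) (hpx : (p : ℤ_[p]) ∣ x) :
    1 ≤ x.valuation :=
  (mem_span_pow_iff_le_valuation x hx 1).1 (Ideal.mem_span_singleton.2 (by simpa using hpx))

theorem toZModPow_mul_eq_zero_iff {m k : ℕ} (hmk : m ≤ k) (c : ℤ_[p]) {x : ZMod (p ^ k)}
    (hx : addOrderOf x = p ^ m) : toZModPow k c * x = 0 ↔ (p : ℤ_[p]) ^ m ∣ c := by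
  have : NeZero (p ^ k) := ⟨pow_ne_zero k (Fact.out : p.Prime).ne_zero⟩
  rw [← Ideal.mem_span_singleton, ← ker_toZModPow, RingHom.mem_ker, ← cast_toZModPow m k hmk,
    ZMod.cast_eq_val, ZMod.natCast_eq_zero_iff, ← hx, addOrderOf_dvd_iff_nsmul_eq_zero,
    nsmul_eq_mul, ZMod.natCast_zmod_val]

theorem toZModPow_pow_mul_eq_self_iff (hp : p ≠ 2) {c : ℤ_[p]} (hc : (p : ℤ_[p]) ∣ c - 1)
    (hc1 : c ≠ 1) {m k : ℕ} (hmk : m ≤ k) {x : ZMod (p ^ k)} (hx : addOrderOf x = p ^ m) (n : ℕ) :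
    toZModPow k c ^ n * x = x ↔ p ^ (m - (c - 1).valuation) ∣ n := by
  rw [← sub_eq_zero, ← sub_one_mul, ← map_pow, ← map_one (toZModPow k), ← map_sub,
    toZModPow_mul_eq_zero_iff hmk _ hx, pow_dvd_pow_sub_one_iff hp hc hc1]

theorem card_orbit_zpowers_of_apply_eq_mul (hp : p ≠ 2) {lam mu : ℤ_[p]}
    (hlam : (p : ℤ_[p]) ∣ lam - 1) (hmu : (p : ℤ_[p]) ∣ mu - 1) (hlne : lam ≠ 1) (hmne : mu ≠ 1)
    {k : ℕ} {σ : Equiv.Perm (ZMod (p ^ k) × ZMod (p ^ k))}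
    (hσ : ∀ q, σ q = (toZModPow k lam * q.1, toZModPow k mu * q.2)) {s t : ℕ} (hs : s ≤ k)
    (ht : t ≤ k) {q : ZMod (p ^ k) × ZMod (p ^ k)} (hq₁ : addOrderOf q.1 = p ^ s)
    (hq₂ : addOrderOf q.2 = p ^ t) :
    Nat.card (orbit (Subgroup.zpowers σ) q) =
      p ^ max (s - (lam - 1).valuation) (t - (mu - 1).valuation) := by
  refine card_orbit_zpowers_of_forall_pow_smul_eq_iff fun n => ?_
  rw [Equiv.Perm.smul_def, Equiv.Perm.pow_apply_of_apply_eq_mul hσ, Prod.ext_iff,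
    toZModPow_pow_mul_eq_self_iff hp hlam hlne hs hq₁,
    toZModPow_pow_mul_eq_self_iff hp hmu hmne ht hq₂, pow_max_dvd_iff]

end PadicInt

/-- Let `ℓ` be an odd prime, `λ, μ ∈ ℤ_ℓ` with `λ ≡ μ ≡ 1 (mod ℓ)`,
`λ ≠ 1`, `μ ≠ 1`, `α = v_ℓ(λ-1)`, `β = v_ℓ(μ-1)`.  Fix `k ≥ 1` and let `σ` be the
automorphism `(x, y) ↦ (λx, μy)` of `(ℤ/ℓ^kℤ)²`.  For `0 ≤ i, j ≤ k-1`, the set `S(i,j)`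
of pairs whose coordinates have additive orders exactly `ℓ^(i+1)` and `ℓ^(j+1)` is stable
under `σ`; each orbit of `⟨σ⟩` inside `S(i,j)` has cardinality `ℓ^ρ(i,j)` with
`ρ(i,j) = max(0, i-α+1, j-β+1)`, and the number of such orbits is `(ℓ-1)²·ℓ^ν(i,j)` with
`ν(i,j) = min(i+j, i+β-1, j+α-1) = i+j-ρ(i,j)`. -/
theorem stmt10 (ℓ : ℕ) [Fact (Nat.Prime ℓ)] (hodd : ℓ ≠ 2)
    (lam mu : ℤ_[ℓ]) (hlam : (ℓ : ℤ_[ℓ]) ∣ (lam - 1)) (hmu : (ℓ : ℤ_[ℓ]) ∣ (mu - 1))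
    (hlne : lam ≠ 1) (hmne : mu ≠ 1)
    (α β : ℕ) (hα : α = (lam - 1).valuation) (hβ : β = (mu - 1).valuation)
    (k : ℕ) (hk : 1 ≤ k)
    (σ : Equiv.Perm (ZMod (ℓ ^ k) × ZMod (ℓ ^ k)))
    (hσ : ∀ p : ZMod (ℓ ^ k) × ZMod (ℓ ^ k),
      σ p = (PadicInt.toZModPow k lam * p.1, PadicInt.toZModPow k mu * p.2))
    (i j : ℕ) (hi : i ≤ k - 1) (hj : j ≤ k - 1)
    (S : Set (ZMod (ℓ ^ k) × ZMod (ℓ ^ k)))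
    (hS : S = {p | addOrderOf p.1 = ℓ ^ (i + 1) ∧ addOrderOf p.2 = ℓ ^ (j + 1)})
    (ρ ν : ℕ) (hρ : ρ = max 0 (max ((i + 1) - α) ((j + 1) - β)))
    (hν : ν = min (i + j) (min (i + β - 1) (j + α - 1))) :
    (∀ p ∈ S, σ p ∈ S)
    ∧ (∀ p ∈ S, Nat.card (MulAction.orbit (Subgroup.zpowers σ) p) = ℓ ^ ρ)
    ∧ Nat.card {ω : MulAction.orbitRel.Quotient (Subgroup.zpowers σ)
          (ZMod (ℓ ^ k) × ZMod (ℓ ^ k)) //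
        ∃ p ∈ S, Quotient.mk (MulAction.orbitRel (Subgroup.zpowers σ) _) p = ω}
        = (ℓ - 1) ^ 2 * ℓ ^ ν
    ∧ ν = i + j - ρ := by
  have hℓ : ℓ.Prime := Fact.out
  have : NeZero (ℓ ^ k) := ⟨pow_ne_zero k hℓ.ne_zero⟩
  have hα1 : 1 ≤ α := hα ▸ one_le_valuation_of_dvd (sub_ne_zero.2 hlne) hlam
  have hβ1 : 1 ≤ β := hβ ▸ one_le_valuation_of_dvd (sub_ne_zero.2 hmne) hmu
  have hinv : ∀ g ∈ Subgroup.zpowers σ, ∀ q ∈ S, g q ∈ S := by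
    intro g hg q hq
    have h := Equiv.Perm.addOrderOf_apply_of_mem_zpowers ((isUnit_of_dvd_sub_one hlam).map _)
      ((isUnit_of_dvd_sub_one hmu).map _) hσ hg q
    rw [hS] at hq ⊢
    exact ⟨h.1.trans hq.1, h.2.trans hq.2⟩
  have horb : ∀ q ∈ S, Nat.card (MulAction.orbit (Subgroup.zpowers σ) q) = ℓ ^ ρ := by
    intro q hq
    rw [hS] at hq
    rw [card_orbit_zpowers_of_apply_eq_mul hodd hlam hmu hlne hmne hσ (by omega) (by omega) hq.1
      hq.2, hρ, zero_max, hα, hβ]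
  have hcount := MulAction.card_orbits_meeting_mul_eq_card (fun g q => hinv g.1 g.2 q) horb
  rw [hS, ZMod.card_addOrderOf_prod_eq_totient_mul (pow_dvd_pow ℓ (by omega))
    (pow_dvd_pow ℓ (by omega)), Nat.totient_prime_pow_succ hℓ, Nat.totient_prime_pow_succ hℓ,
    ← hS] at hcount
  refine ⟨fun q => hinv σ (Subgroup.mem_zpowers σ) q, horb, ?_, by omega⟩
  refine Nat.eq_of_mul_eq_mul_right (pow_pos hℓ.pos ρ) ?_
  rw [hcount, mul_assoc _ (ℓ ^ ν), ← pow_add, show ν + ρ = i + j by omega, pow_add]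
  ring
end

section
/- Let 𝔽_q be a finite field, ℓ an odd prime, and P₁ ∈ 𝔽_q[X] an irreducible polynomial of degree d₁ such that ℓ divides q^{d₁} − 1 and such that the image of X in the field F₁ = 𝔽_q[X]/(P₁) has multiplicative order q^{d₁} − 1 (i.e. P₁ is primitive). Then for every integer m ≥ 0, the polynomial P₁(X^{ℓ^m}) is irreducible in 𝔽_q[X]; in particular 𝔽_q[X]/(P₁(X^{ℓ^m})) is a field, of degree d₁·ℓ^m over 𝔽_q. -/
open Polynomial IntermediateField

/-!
The root `α` of `P₁` generates `F₁ˣ`, a cyclic group whose order `q ^ d₁ - 1` is divisible by `ℓ`,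
so `α` is not an `ℓ`-th power in `F₁`: otherwise `α ^ ((q ^ d₁ - 1) / ℓ) = 1`. For odd `ℓ` the
Kummer-theoretic criterion then makes `X ^ ℓ ^ m - α` irreducible over `F₁ = 𝔽_q(α)`, and Capelli's
lemma (`Polynomial.irreducible_comp`) turns this into irreducibility of `P₁(X ^ ℓ ^ m)` over `𝔽_q`.
-/

theorem FiniteField.pow_ne_of_orderOf_eq_natCard_sub_one {K : Type*} [Field K] [Finite K] {a : K}
    (ha : orderOf a = Nat.card K - 1) {n : ℕ} (hn : n ∣ Nat.card K - 1) (hn1 : n ≠ 1) (b : K) :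
    b ^ n ≠ a := by
  cases nonempty_fintype K
  rw [Nat.card_eq_fintype_card] at ha hn
  set N := Fintype.card K - 1
  have hN : 0 < N := Nat.sub_pos_of_lt Fintype.one_lt_card
  have hn0 : n ≠ 0 := by rintro rfl; exact hN.ne' (zero_dvd_iff.mp hn)
  intro hb
  have hb0 : b ≠ 0 := by
    rintro rfl
    rw [zero_pow hn0] at hb
    rw [← hb, orderOf_eq_zero_iff'.mpr fun k hk => by simp [hk.ne']] at ha
    exact hN.ne ha
  have hpow : a ^ (N / n) = 1 := by
    rw [← hb, ← pow_mul, Nat.mul_div_cancel' hn, FiniteField.pow_card_sub_one_eq_one b hb0]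
  have hdvd : N ∣ N / n := by simpa only [ha] using orderOf_dvd_of_pow_eq_one hpow
  have hpos : 0 < N / n := Nat.div_pos (Nat.le_of_dvd hN hn) (by omega)
  exact hpos.ne' (Nat.eq_zero_of_dvd_of_lt hdvd (Nat.div_lt_self hN (by omega)))

theorem AdjoinRoot.natCard_eq_pow_natDegree {K : Type*} [Field K] {f : K[X]} (hf : f ≠ 0) :
    Nat.card (AdjoinRoot f) = Nat.card K ^ f.natDegree := by
  have := (powerBasis hf).finite
  rw [Module.natCard_eq_pow_finrank (K := K), (powerBasis hf).finrank, powerBasis_dim]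

theorem Polynomial.Irreducible.comp_X_pow_prime_pow {K : Type*} [Field K] {p : K[X]}
    (hp : Irreducible p) {ℓ : ℕ} (hℓ : ℓ.Prime) (hodd : ℓ ≠ 2) (m : ℕ)
    (hroot : ∀ b : AdjoinRoot p, b ^ ℓ ≠ AdjoinRoot.root p) :
    Irreducible (p.comp (X ^ ℓ ^ m)) := by
  have hu : IsUnit (C p.leadingCoeff⁻¹) :=
    isUnit_C.mpr (inv_ne_zero (leadingCoeff_ne_zero.mpr hp.ne_zero)).isUnit
  have hassoc : Associated p (p * C p.leadingCoeff⁻¹) := associated_mul_unit_right p _ hu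
  suffices Irreducible ((p * C p.leadingCoeff⁻¹).comp (X ^ ℓ ^ m)) by
    rwa [mul_comp, C_comp, irreducible_mul_isUnit hu] at this
  refine irreducible_comp (monic_mul_leadingCoeff_inv hp.ne_zero) (monic_X_pow _)
    (hassoc.irreducible hp) fun E _ _ x hx => ?_
  have hint : IsIntegral K x := minpoly.ne_zero_iff.mp (hx ▸ hassoc.irreducible hp).ne_zero
  let e : AdjoinRoot p ≃ₐ[K] K⟮x⟯ :=
    (AdjoinRoot.algEquivOfAssociated K p _ (hx ▸ hassoc)).trans (adjoinRootEquivAdjoin K hint)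
  have he : e (AdjoinRoot.root p) = AdjoinSimple.gen K x := by
    simp [e, adjoinRootEquivAdjoin_apply_root]
  rw [Polynomial.map_pow, map_X]
  refine X_pow_sub_C_irreducible_of_prime_pow hℓ hodd m fun b hb => hroot (e.symm b) ?_
  rw [← map_pow, hb, ← he, e.symm_apply_apply]

/-- Let `𝔽_q` be a finite field, `ℓ` an odd prime, and `P₁ ∈ 𝔽_q[X]`
irreducible of degree `d₁`, with `ℓ ∣ q^d₁ - 1`, such that the image of `X` in
`F₁ = 𝔽_q[X]/(P₁)` has multiplicative order `q^d₁ - 1` (`P₁` is primitive).  Then for every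
`m ≥ 0` the polynomial `P₁(X^(ℓ^m))` is irreducible over `𝔽_q`; in particular
`𝔽_q[X]/(P₁(X^(ℓ^m)))` is a field of degree `d₁·ℓ^m` over `𝔽_q`. -/
theorem stmt15 (F : Type*) [Field F] [Fintype F]
    (ℓ : ℕ) (hℓ : Nat.Prime ℓ) (hodd : ℓ ≠ 2)
    (P₁ : F[X]) (hirr : Irreducible P₁) (d₁ : ℕ) (hdeg : P₁.natDegree = d₁)
    (hdvd : ℓ ∣ Fintype.card F ^ d₁ - 1)
    (hprim : orderOf (AdjoinRoot.root P₁) = Fintype.card F ^ d₁ - 1) :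
    ∀ m : ℕ,
      Irreducible (P₁.comp (X ^ ℓ ^ m))
      ∧ (P₁.comp (X ^ ℓ ^ m)).natDegree = d₁ * ℓ ^ m
      ∧ IsField (AdjoinRoot (P₁.comp (X ^ ℓ ^ m))) := by
  intro m
  have : Fact (Irreducible P₁) := ⟨hirr⟩
  have hcard : Nat.card (AdjoinRoot P₁) = Fintype.card F ^ d₁ := by
    rw [AdjoinRoot.natCard_eq_pow_natDegree hirr.ne_zero, Nat.card_eq_fintype_card, hdeg]
  have : Finite (AdjoinRoot P₁) :=
    Nat.finite_of_card_ne_zero (hcard ▸ pow_ne_zero _ Fintype.card_ne_zero)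
  have hcomp : Irreducible (P₁.comp (X ^ ℓ ^ m)) :=
    hirr.comp_X_pow_prime_pow hℓ hodd m <| FiniteField.pow_ne_of_orderOf_eq_natCard_sub_one
      (hcard ▸ hprim) (hcard ▸ hdvd) hℓ.ne_one
  refine ⟨hcomp, by rw [natDegree_comp, natDegree_X_pow, hdeg], ?_⟩
  have : Fact (Irreducible (P₁.comp (X ^ ℓ ^ m))) := ⟨hcomp⟩
  exact Field.toIsField _
end
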